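/- arXiv:1806.10051 — 5 statements merged into one kernel-verified Lean document; each statement's English description precedes it below -/
import Mathlib

section
/- Fix an n-vertex set V with a linear order, a parameter p ∈ (0,1), and any fixed family G₁,…,G_N of simple graphs on vertex set V with N ≤ n². Let S be a single p-random subset of V, and for each t ∈ {1,…,N} let M_t := Greedy(G_t[S]) and U_t := V \ (M_t ∪ N_{G_t}(M_t)). Then with probability at least 1 − 1/n², for every t ∈ {1,…,N} the maximum degree of G_t[U_t] is at most 5·p⁻¹·ln n. -/
open MeasureTheory ProbabilityTheory
open scoped ENNReal

section Defs

variable {V : Type*}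

/-- `M` is a maximal independent set of the induced subgraph `G[A]`. -/
def IsMISOn (G : SimpleGraph V) (A M : Set V) : Prop :=
  M ⊆ A ∧ (∀ u ∈ M, ∀ v ∈ M, ¬ G.Adj u v) ∧ ∀ v ∈ A, v ∉ M → ∃ u ∈ M, G.Adj u v

/-- `M` is a maximal independent set of `G`. -/
def IsMIS (G : SimpleGraph V) (M : Set V) : Prop :=
  (∀ u ∈ M, ∀ v ∈ M, ¬ G.Adj u v) ∧ ∀ v ∉ M, ∃ u ∈ M, G.Adj u v

/-- The set of vertices adjacent in `G` to at least one vertex of `A`. -/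
def setNbrs (G : SimpleGraph V) (A : Set V) : Set V := {v | ∃ a ∈ A, G.Adj a v}

/-- One pass of the greedy MIS algorithm: scan the list in order, adding a vertex to the
accumulator iff none of its neighbors has already been added. -/
def greedyAux [DecidableEq V] (G : SimpleGraph V) [DecidableRel G.Adj] :
    Finset V → List V → Finset V
  | acc, [] => acc
  | acc, v :: l => greedyAux G (if ∃ u ∈ acc, G.Adj u v then acc else insert v acc) l

/-- The greedy maximal independent set of the induced subgraph `G[S]`, obtained by
iterating over the vertices of `S` in increasing order of the linear order on `V`. -/
def greedyOn [LinearOrder V] [DecidableEq V] (G : SimpleGraph V) [DecidableRel G.Adj]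
    (S : Finset V) : Finset V :=
  greedyAux G ∅ (S.sort (· ≤ ·))

/-- The random subset of `V` described by `ω : V → Bool`. -/
def sampleOf [Fintype V] (ω : V → Bool) : Finset V :=
  Finset.univ.filter fun v => ω v = true

/-- Neighbors (in `G`) of a finite set of vertices. -/
def nbrsFinset [Fintype V] (G : SimpleGraph V) [DecidableRel G.Adj] (M : Finset V) : Finset V :=
  Finset.univ.filter fun v => ∃ m ∈ M, G.Adj m v

/-- `U := V \ (M ∪ N_G(M))` where `M := Greedy(G[S])`. -/
def survivors [Fintype V] [LinearOrder V] [DecidableEq V] (G : SimpleGraph V)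
    [DecidableRel G.Adj] (S : Finset V) : Finset V :=
  Finset.univ \ (greedyOn G S ∪ nbrsFinset G (greedyOn G S))

/-- Degree of `u` in the induced subgraph `G[U]`. -/
def degOn [DecidableEq V] (G : SimpleGraph V) [DecidableRel G.Adj] (U : Finset V) (u : V) : ℕ :=
  (U.filter fun w => G.Adj u w).card

/-- The distribution of a `p`-random subset of `V` (encoded as `V → Bool`):
each vertex is included independently with probability `p`. -/
noncomputable def pRandom (V : Type*) [Fintype V] (p : ℝ) (hp : p ≤ 1) :
    Measure (V → Bool) :=
  Measure.pi fun _ => (PMF.bernoulli (Real.toNNReal p) (Real.toNNReal_le_one.mpr hp)).toMeasure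

instance pRandom.instIsProbabilityMeasure {V : Type*} [Fintype V] (p : ℝ) (hp : p ≤ 1) :
    IsProbabilityMeasure (pRandom V p hp) := by
  unfold pRandom; infer_instance

/-- The joint distribution of `r` mutually independent random subsets of `V`,
the `j`-th being a `p j`-random subset. -/
noncomputable def multiRandom (V : Type*) [Fintype V] {r : ℕ} (p : Fin r → ℝ)
    (hp : ∀ j, p j ≤ 1) : Measure (Fin r → V → Bool) :=
  Measure.pi fun j => pRandom V (p j) (hp j)

end Defs

/-!
Fix one graph `G` and a vertex `u`. Call `v` a candidate if it is a neighbour of `u` that is not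
dominated by the greedy set built from the sampled vertices below `v`. Every neighbour of `u`
inside `U` is a candidate, and if `u` survives then no candidate was sampled, since a sampled
candidate would join `M` and dominate `u`. Whether `v` is a candidate depends only on the coins
of the vertices below `v`, so revealing the coins in increasing order, each candidate's coin is
still fresh: `D` candidates all missing the sample has probability at most `(1 - p) ^ D`. For
`D = ⌈5 p⁻¹ ln n⌉` this is at most `n⁻⁵`, and a union bound over the at most `n²` graphs and the
`n` vertices leaves `n⁻²`.
-/

open Finset

theorem Finset.sort_eq_sort_filter_lt_append {V : Type*} [LinearOrder V] (S : Finset V) (v : V) :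
    S.sort (· ≤ ·) = {x ∈ S | x < v}.sort (· ≤ ·) ++ {x ∈ S | v ≤ x}.sort (· ≤ ·) := by
  refine List.Perm.eq_of_pairwise' (pairwise_sort _ _) ?_ ?_
  · refine List.pairwise_append.mpr ⟨pairwise_sort _ _, pairwise_sort _ _, ?_⟩
    simp only [mem_sort, mem_filter]
    exact fun x hx y hy => (hx.2.trans_le hy.2).le
  · rw [List.perm_ext_iff_of_nodup (sort_nodup _ _)]
    · intro x
      simp only [List.mem_append, mem_sort, mem_filter]
      constructor
      · exact fun hx => (lt_or_ge x v).imp (⟨hx, ·⟩) (⟨hx, ·⟩)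
      · rintro (hx | hx) <;> exact hx.1
    · refine List.nodup_append.mpr ⟨sort_nodup _ _, sort_nodup _ _, ?_⟩
      simp only [mem_sort, mem_filter]
      rintro x hx _ hy rfl
      exact hx.2.not_ge hy.2

section Greedy

variable {V : Type*} [DecidableEq V] (G : SimpleGraph V) [DecidableRel G.Adj]

theorem greedyAux_append (acc : Finset V) (l₁ l₂ : List V) :
    greedyAux G acc (l₁ ++ l₂) = greedyAux G (greedyAux G acc l₁) l₂ := by
  induction l₁ generalizing acc with
  | nil => rfl
  | cons v l ih => exact ih _

theorem subset_greedyAux (acc : Finset V) (l : List V) : acc ⊆ greedyAux G acc l := by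
  induction l generalizing acc with
  | nil => exact subset_rfl
  | cons v l ih =>
    refine subset_trans ?_ (ih _)
    split_ifs
    exacts [subset_rfl, subset_insert v acc]

theorem mem_greedyAux_cons {acc : Finset V} {v : V} (h : ∀ u ∈ acc, ¬ G.Adj u v) (l : List V) :
    v ∈ greedyAux G acc (v :: l) := by
  refine subset_greedyAux G _ l ?_
  rw [if_neg (by simpa using h)]
  exact mem_insert_self v acc

variable [LinearOrder V]

theorem greedyOn_eq_greedyAux_greedyOn_filter_lt (S : Finset V) (v : V) :
    greedyOn G S = greedyAux G (greedyOn G {x ∈ S | x < v}) ({x ∈ S | v ≤ x}.sort (· ≤ ·)) := by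
  rw [greedyOn, S.sort_eq_sort_filter_lt_append v, greedyAux_append, greedyOn]

theorem greedyOn_filter_lt_subset (S : Finset V) (v : V) :
    greedyOn G {x ∈ S | x < v} ⊆ greedyOn G S := by
  rw [greedyOn_eq_greedyAux_greedyOn_filter_lt G S v]
  exact subset_greedyAux G _ _

theorem mem_greedyOn_of_forall_not_adj {S : Finset V} {v : V} (hv : v ∈ S)
    (h : ∀ x ∈ greedyOn G {x ∈ S | x < v}, ¬ G.Adj x v) : v ∈ greedyOn G S := by
  have hsplit : {x ∈ S | v ≤ x} = insert v {x ∈ S | v < x} := by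
    ext x
    simp only [mem_filter, mem_insert, le_iff_eq_or_lt]
    constructor
    · rintro ⟨hx, rfl | hvx⟩ <;> simp_all
    · rintro (rfl | ⟨hx, hvx⟩) <;> simp_all
  rw [greedyOn_eq_greedyAux_greedyOn_filter_lt G S v, hsplit,
    sort_insert _ (fun x hx => (mem_filter.mp hx).2.le) (by simp)]
  exact mem_greedyAux_cons G h _

end Greedy

section Survivors

variable {V : Type*} [Fintype V] [LinearOrder V] [DecidableEq V]
  (G : SimpleGraph V) [DecidableRel G.Adj]

def IsGreedyCandidate (u : V) (S : Finset V) (v : V) : Prop :=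
  G.Adj u v ∧ ∀ x ∈ greedyOn G {x ∈ S | x < v}, ¬ G.Adj x v

instance (u : V) (S : Finset V) : DecidablePred (IsGreedyCandidate G u S) :=
  fun _ => inferInstanceAs (Decidable (_ ∧ _))

variable {G}

theorem mem_survivors {S : Finset V} {u : V} :
    u ∈ survivors G S ↔ u ∉ greedyOn G S ∧ ∀ m ∈ greedyOn G S, ¬ G.Adj m u := by
  simp [survivors, nbrsFinset]

theorem notMem_of_isGreedyCandidate {S : Finset V} {u v : V} (hu : u ∈ survivors G S)
    (hv : IsGreedyCandidate G u S v) : v ∉ S :=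
  fun hvS => (mem_survivors.mp hu).2 v (mem_greedyOn_of_forall_not_adj G hvS hv.2) hv.1.symm

theorem isGreedyCandidate_of_mem_survivors {S : Finset V} {u w : V} (hw : w ∈ survivors G S)
    (huw : G.Adj u w) : IsGreedyCandidate G u S w :=
  ⟨huw, fun x hx => (mem_survivors.mp hw).2 x (greedyOn_filter_lt_subset G S w hx)⟩

theorem degOn_survivors_le (S : Finset V) (u : V) :
    degOn G (survivors G S) u ≤ #{v | IsGreedyCandidate G u S v} :=
  card_le_card fun w hw => by
    rw [mem_filter] at hw ⊢
    exact ⟨mem_univ w, isGreedyCandidate_of_mem_survivors hw.1 hw.2⟩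

theorem isGreedyCandidate_sampleOf_congr {ω ω' : V → Bool} {u v : V}
    (h : ∀ x < v, ω x = ω' x) :
    IsGreedyCandidate G u (sampleOf ω) v ↔ IsGreedyCandidate G u (sampleOf ω') v := by
  have : {x ∈ sampleOf ω | x < v} = {x ∈ sampleOf ω' | x < v} := by
    ext x
    simp only [sampleOf, mem_filter, mem_univ, true_and]
    exact ⟨fun hx => ⟨h x hx.2 ▸ hx.1, hx.2⟩, fun hx => ⟨(h x hx.2).symm ▸ hx.1, hx.2⟩⟩
  rw [IsGreedyCandidate, IsGreedyCandidate, this]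

end Survivors

section Nonanticipating

variable {V : Type*} [LinearOrder V]

def IsNonanticipating (Q : V → (V → Bool) → Prop) : Prop :=
  ∀ v ω ω', (∀ x < v, ω x = ω' x) → (Q v ω ↔ Q v ω')

open Classical in
def ManyMarkedAllFalse (Q : V → (V → Bool) → Prop) (R : Finset V) (D : ℕ) (ω : V → Bool) :
    Prop :=
  D ≤ #{v ∈ R | Q v ω} ∧ ∀ v ∈ R, Q v ω → ω v = false

theorem manyMarkedAllFalse_insert_of_marked {Q : V → (V → Bool) → Prop} {a : V} {s : Finset V}
    (ha : a ∉ s) {ω : V → Bool} (hQ : Q a ω) (D : ℕ) :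
    ManyMarkedAllFalse Q (insert a s) D ω ↔ ω a = false ∧ ManyMarkedAllFalse Q s (D - 1) ω := by
  classical
  simp only [ManyMarkedAllFalse, filter_insert, if_pos hQ, card_insert_of_notMem
    (fun h => ha (mem_filter.mp h).1), forall_mem_insert, Nat.sub_le_iff_le_add]
  tauto

theorem manyMarkedAllFalse_insert_of_not_marked {Q : V → (V → Bool) → Prop} {a : V}
    {s : Finset V} {ω : V → Bool} (hQ : ¬ Q a ω) (D : ℕ) :
    ManyMarkedAllFalse Q (insert a s) D ω ↔ ManyMarkedAllFalse Q s D ω := by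
  classical
  simp only [ManyMarkedAllFalse, filter_insert, if_neg hQ, forall_mem_insert]
  tauto

variable [Fintype V]

def extensions (R : Finset V) (ω₀ : V → Bool) : Finset (V → Bool) :=
  {f | ∀ v ∉ R, f v = ω₀ v}

theorem mem_extensions {R : Finset V} {ω₀ f : V → Bool} :
    f ∈ extensions R ω₀ ↔ ∀ v ∉ R, f v = ω₀ v := by
  simp [extensions]

theorem filter_extensions_insert {a : V} {s : Finset V} (ha : a ∉ s) (ω₀ : V → Bool) (b : Bool) :
    {f ∈ extensions (insert a s) ω₀ | f a = b} = extensions s (Function.update ω₀ a b) := by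
  ext f
  simp only [extensions, mem_filter, mem_univ, true_and, mem_insert, not_or]
  constructor
  · rintro ⟨hf, rfl⟩ v hv
    by_cases hva : v = a
    · subst hva; simp
    · rw [Function.update_of_ne hva]; exact hf v ⟨hva, hv⟩
  · intro hf
    refine ⟨fun v hv => ?_, by simpa using hf a ha⟩
    simpa [Function.update_of_ne hv.1] using hf v hv.2

theorem sum_extensions_insert {a : V} {s : Finset V} (ha : a ∉ s) (ω₀ : V → Bool)
    (P : (V → Bool) → Prop) [DecidablePred P] (w : Bool → ℝ≥0∞) :
    ∑ f ∈ extensions (insert a s) ω₀ with P f, ∏ v ∈ insert a s, w (f v) =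
      ∑ b, w b * ∑ f ∈ extensions s (Function.update ω₀ a b) with P f, ∏ v ∈ s, w (f v) := by
  rw [← sum_fiberwise _ (· a)]
  refine Fintype.sum_congr _ _ fun b => ?_
  rw [filter_filter, filter_congr (fun _ _ => and_comm), ← filter_filter,
    filter_extensions_insert ha, mul_sum]
  refine sum_congr rfl fun f hf => ?_
  have hfa : f a = b := by simpa using mem_extensions.mp (mem_filter.mp hf).1 a ha
  rw [prod_insert ha, hfa]

/- Summing over `extensions R ω₀` conditions on the coordinates outside `R`. The coins of `R` are
revealed in increasing order: whether `min R` is marked is already fixed by the conditioning, so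
its coin is an independent factor `w b`. -/
open Classical in
theorem sum_extensions_manyMarkedAllFalse_le {Q : V → (V → Bool) → Prop}
    (hQ : IsNonanticipating Q) {w : Bool → ℝ≥0∞} (hw : w true + w false = 1) (R : Finset V)
    (D : ℕ) (ω₀ : V → Bool) :
    ∑ f ∈ extensions R ω₀ with ManyMarkedAllFalse Q R D f, ∏ v ∈ R, w (f v) ≤ w false ^ D := by
  induction R using Finset.induction_on_min generalizing D ω₀ with
  | empty =>
    have hext : extensions ∅ ω₀ = {ω₀} := by
      ext f
      simp [mem_extensions, funext_iff]
    rcases D with _ | D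
    · simpa [hext] using (card_filter_le _ _).trans (card_singleton ω₀).le
    · simp [hext, ManyMarkedAllFalse]
  | insert a s has ih =>
    have ha : a ∉ s := fun h => lt_irrefl a (has a h)
    have hQa : ∀ b, ∀ f ∈ extensions s (Function.update ω₀ a b), f a = b ∧ (Q a f ↔ Q a ω₀) := by
      intro b f hf
      have hf' := mem_extensions.mp hf
      refine ⟨by simpa using hf' a ha, hQ a f ω₀ fun x hx => ?_⟩
      rw [hf' x fun hxs => (has x hxs).not_gt hx, Function.update_of_ne hx.ne]
    rw [sum_extensions_insert ha, Fintype.sum_bool]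
    by_cases hmarked : Q a ω₀
    · have hfalse := filter_congr fun f hf =>
        (manyMarkedAllFalse_insert_of_marked ha ((hQa false f hf).2.mpr hmarked) D).trans
          (and_iff_right (hQa false f hf).1)
      have htrue : ∀ f ∈ extensions s (Function.update ω₀ a true),
          ¬ ManyMarkedAllFalse Q (insert a s) D f := fun f hf hE => by
        have := ((manyMarkedAllFalse_insert_of_marked ha ((hQa true f hf).2.mpr hmarked) D).mp
          hE).1
        simp [(hQa true f hf).1] at this
      rw [filter_false_of_mem htrue, sum_empty, mul_zero, zero_add, hfalse]
      calc _ ≤ w false * w false ^ (D - 1) := by gcongr; exact ih _ _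
        _ = w false ^ (D - 1 + 1) := (pow_succ' _ _).symm
        _ ≤ w false ^ D := pow_le_pow_right_of_le_one' (hw ▸ le_add_self) (by omega)
    · have hbranch : ∀ b, ∑ f ∈ extensions s (Function.update ω₀ a b) with
          ManyMarkedAllFalse Q (insert a s) D f, ∏ v ∈ s, w (f v) ≤ w false ^ D := fun b => by
        rw [filter_congr fun f hf =>
          manyMarkedAllFalse_insert_of_not_marked (mt (hQa b f hf).2.mp hmarked) D]
        exact ih D _
      calc _ ≤ w true * w false ^ D + w false * w false ^ D := by
            gcongr <;> exact hbranch _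
        _ = w false ^ D := by rw [← add_mul, hw, one_mul]

theorem PMF.apply_true_add_apply_false (π : PMF Bool) : π true + π false = 1 := by
  rw [← π.tsum_coe, tsum_fintype, Fintype.sum_bool]

theorem pi_toMeasure_setOf_manyMarkedAllFalse_le {Q : V → (V → Bool) → Prop}
    (hQ : IsNonanticipating Q) (π : PMF Bool) (D : ℕ) :
    Measure.pi (fun _ : V => π.toMeasure) {ω | ManyMarkedAllFalse Q univ D ω} ≤ π false ^ D := by
  classical
  have hext : extensions (univ : Finset V) (fun _ => false) = univ := by
    ext f; simp [mem_extensions]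
  calc _ = ∑ ω ∈ extensions univ (fun _ => false) with ManyMarkedAllFalse Q univ D ω,
        ∏ v, π (ω v) := by
        rw [hext, ← coe_filter_univ, ← sum_measure_singleton]
        simp
    _ ≤ π false ^ D :=
        sum_extensions_manyMarkedAllFalse_le hQ π.apply_true_add_apply_false univ D _

end Nonanticipating

theorem coe_one_sub_toNNReal_le_ofReal (p : ℝ) :
    ((1 - p.toNNReal : NNReal) : ℝ≥0∞) ≤ ENNReal.ofReal (1 - p) := by
  refine ENNReal.coe_le_coe.mpr (tsub_le_iff_right.mpr ?_)
  simpa using Real.toNNReal_add_le (r := 1 - p) (p := p)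

section HighDegree

variable {V : Type*} [Fintype V] [LinearOrder V] [DecidableEq V]

theorem isNonanticipating_isGreedyCandidate (G : SimpleGraph V) [DecidableRel G.Adj] (u : V) :
    IsNonanticipating fun v ω => IsGreedyCandidate G u (sampleOf ω) v :=
  fun _ _ _ h => isGreedyCandidate_sampleOf_congr h

theorem setOf_highDegree_survivor_subset (G : SimpleGraph V) [DecidableRel G.Adj] (u : V)
    (D : ℕ) :
    {ω | u ∈ survivors G (sampleOf ω) ∧ D ≤ degOn G (survivors G (sampleOf ω)) u} ⊆
      {ω | ManyMarkedAllFalse (fun v ω => IsGreedyCandidate G u (sampleOf ω) v) univ D ω} := by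
  rintro ω ⟨hu, hdeg⟩
  refine ⟨?_, fun v _ hv => ?_⟩
  · exact hdeg.trans ((degOn_survivors_le (sampleOf ω) u).trans_eq (by congr))
  · simpa [sampleOf] using notMem_of_isGreedyCandidate hu hv

theorem pRandom_highDegree_survivor_le (G : SimpleGraph V) [DecidableRel G.Adj] (u : V)
    (D : ℕ) {p : ℝ} (hp : p ≤ 1) :
    pRandom V p hp {ω | u ∈ survivors G (sampleOf ω) ∧ D ≤ degOn G (survivors G (sampleOf ω)) u}
      ≤ ENNReal.ofReal (1 - p) ^ D := by
  calc _ ≤ _ := measure_mono (setOf_highDegree_survivor_subset G u D)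
    _ ≤ _ := pi_toMeasure_setOf_manyMarkedAllFalse_le (isNonanticipating_isGreedyCandidate G u) _ D
    _ ≤ _ := by gcongr; exact coe_one_sub_toNNReal_le_ofReal p

theorem pRandom_exists_highDegree_survivor_le {ι : Type*} [Fintype ι] (G : ι → SimpleGraph V)
    [∀ t, DecidableRel (G t).Adj] (D : ℕ) {p : ℝ} (hp : p ≤ 1) :
    pRandom V p hp {ω | ∃ t, ∃ u ∈ survivors (G t) (sampleOf ω),
        D ≤ degOn (G t) (survivors (G t) (sampleOf ω)) u}
      ≤ Fintype.card ι * Fintype.card V * ENNReal.ofReal (1 - p) ^ D := by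
  have hunion : {ω | ∃ t, ∃ u ∈ survivors (G t) (sampleOf ω),
      D ≤ degOn (G t) (survivors (G t) (sampleOf ω)) u} = ⋃ tu : ι × V,
        {ω | tu.2 ∈ survivors (G tu.1) (sampleOf ω) ∧
          D ≤ degOn (G tu.1) (survivors (G tu.1) (sampleOf ω)) tu.2} := by
    ext ω
    simp [Prod.exists]
  calc _ ≤ ∑ tu : ι × V, ENNReal.ofReal (1 - p) ^ D := by
        rw [hunion]
        exact (measure_iUnion_fintype_le _ _).trans
          (sum_le_sum fun tu _ => pRandom_highDegree_survivor_le _ _ _ _)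
    _ = _ := by simp [mul_assoc]

end HighDegree

theorem one_sub_pow_ceil_le_rpow {p x : ℝ} (hp0 : 0 < p) (hp1 : p ≤ 1) (hx : 0 < x) (k : ℝ) :
    (1 - p) ^ ⌈k * p⁻¹ * Real.log x⌉₊ ≤ x ^ (-k) := by
  set D := ⌈k * p⁻¹ * Real.log x⌉₊
  have hD : k * Real.log x ≤ p * D := by
    calc k * Real.log x = p * (k * p⁻¹ * Real.log x) := by field_simp
      _ ≤ p * D := by gcongr; exact Nat.le_ceil _
  calc (1 - p) ^ D ≤ Real.exp (-p) ^ D :=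
        pow_le_pow_left₀ (by linarith) (by linarith [Real.add_one_le_exp (-p)]) D
    _ = Real.exp (-(p * D)) := by rw [← Real.exp_nat_mul]; ring_nf
    _ ≤ Real.exp (Real.log x * -k) := by gcongr; linarith
    _ = x ^ (-k) := (Real.rpow_def_of_pos hx _).symm

theorem mul_one_sub_pow_ceil_le {N n : ℕ} (hn : 0 < n) (hN : N ≤ n ^ 2) {p : ℝ} (hp0 : 0 < p)
    (hp1 : p ≤ 1) : (N * n : ℝ) * (1 - p) ^ ⌈5 * p⁻¹ * Real.log n⌉₊ ≤ ((n : ℝ) ^ 2)⁻¹ := by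
  have hnR : (0 : ℝ) < n := by exact_mod_cast hn
  calc (N * n : ℝ) * (1 - p) ^ ⌈5 * p⁻¹ * Real.log n⌉₊ ≤ (n ^ 2 * n) * (n : ℝ) ^ (-5 : ℝ) := by
        gcongr
        · exact_mod_cast hN
        · exact one_sub_pow_ceil_le_rpow hp0 hp1 hnR 5
    _ = ((n : ℝ) ^ 2)⁻¹ := by
        rw [Real.rpow_neg hnR.le]
        norm_num
        field_simp

/-- For an `n`-vertex set `V` with a linear order, `p ∈ (0,1)`, and a fixed family
`G₁,…,G_N` of graphs on `V` with `N ≤ n²`, letting `S` be a single `p`-random subset of `V`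
and, for each `t`, `M_t := Greedy(G_t[S])` and `U_t := V \ (M_t ∪ N_{G_t}(M_t))`, with
probability at least `1 - 1/n²` every `G_t[U_t]` has maximum degree at most `5·p⁻¹·ln n`. -/
theorem stmt6 {V : Type*} [Fintype V] [LinearOrder V] [DecidableEq V]
    (p : ℝ) (hp0 : 0 < p) (hp1 : p < 1) (N : ℕ) (hN : N ≤ Fintype.card V ^ 2)
    (G : Fin N → SimpleGraph V) [inst : ∀ t, DecidableRel (G t).Adj] :
    1 - 1 / (Fintype.card V : ℝ≥0∞) ^ 2 ≤
      pRandom V p hp1.le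
        {ω | ∀ t, ∀ u ∈ survivors (G t) (sampleOf ω),
          (degOn (G t) (survivors (G t) (sampleOf ω)) u : ℝ) ≤
            5 * p⁻¹ * Real.log (Fintype.card V)} := by
  set n := Fintype.card V
  rcases Nat.eq_zero_or_pos n with hn | hn
  · simp [hn]
  set D := ⌈5 * p⁻¹ * Real.log n⌉₊
  set good := {ω : V → Bool | ∀ t, ∀ u ∈ survivors (G t) (sampleOf ω),
    (degOn (G t) (survivors (G t) (sampleOf ω)) u : ℝ) ≤ 5 * p⁻¹ * Real.log n}
  have hbad : goodᶜ ⊆ {ω | ∃ t, ∃ u ∈ survivors (G t) (sampleOf ω),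
      D ≤ degOn (G t) (survivors (G t) (sampleOf ω)) u} := by
    intro ω hω
    simp only [good, Set.mem_compl_iff, Set.mem_ofPred_eq, not_forall, not_le] at hω
    obtain ⟨t, u, hu, hdeg⟩ := hω
    exact ⟨t, u, hu, Nat.ceil_le.mpr hdeg.le⟩
  have hcompl : pRandom V p hp1.le goodᶜ ≤ 1 / (n : ℝ≥0∞) ^ 2 := by
    refine (measure_mono hbad).trans <| (pRandom_exists_highDegree_survivor_le G D _).trans ?_
    rw [Fintype.card_fin, one_div, ← ENNReal.ofReal_natCast, ← ENNReal.ofReal_natCast n,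
      ← ENNReal.ofReal_pow (by linarith), ← ENNReal.ofReal_mul (by positivity),
      ← ENNReal.ofReal_mul (by positivity), ← ENNReal.ofReal_pow (by positivity),
      ← ENNReal.ofReal_inv_of_pos (by positivity)]
    exact ENNReal.ofReal_le_ofReal (mul_one_sub_pow_ceil_le hn hN hp0 hp1.le)
  rw [prob_compl_eq_one_sub (Set.to_countable good).measurableSet] at hcompl
  exact tsub_le_iff_left.mpr (tsub_le_iff_right.mp hcompl)
end

section
/- Let G be a simple graph on a finite vertex set V, let H ⊆ V, and let M_H be a maximal independent set of the induced subgraph G[H]. Define I := N_G(M_H) \ H and L := V \ (H ∪ I), and let M_L be a maximal independent set of the induced subgraph G[L]. Then M_H ∪ M_L is a maximal independent set of G. -/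
open MeasureTheory ProbabilityTheory
open scoped ENNReal

/-! `M_L` avoids `N_G(M_H)`, so no edge joins `M_H` to `M_L`. A vertex of `H ∪ N_G(M_H)` outside
`M_H` is dominated by `M_H`, and every remaining vertex lies in `L` and is dominated by `M_L`. -/

section

variable {V : Type*} {G : SimpleGraph V}

lemma independent_union {A B : Set V} (hA : ∀ u ∈ A, ∀ v ∈ A, ¬ G.Adj u v)
    (hB : ∀ u ∈ B, ∀ v ∈ B, ¬ G.Adj u v) (hAB : ∀ u ∈ A, ∀ v ∈ B, ¬ G.Adj u v) :
    ∀ u ∈ A ∪ B, ∀ v ∈ A ∪ B, ¬ G.Adj u v := by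
  rintro u (hu | hu) v (hv | hv) hadj
  · exact hA u hu v hv hadj
  · exact hAB u hu v hv hadj
  · exact hAB v hv u hu hadj.symm
  · exact hB u hu v hv hadj

lemma IsMISOn.exists_adj_of_mem_union_setNbrs {H M : Set V} {v : V} (hM : IsMISOn G H M)
    (hv : v ∈ H ∪ setNbrs G M) (hvM : v ∉ M) : ∃ u ∈ M, G.Adj u v := by
  rcases hv with hvH | hvN
  · exact hM.2.2 v hvH hvM
  · exact hvN

theorem IsMISOn.isMIS_union {H MH ML : Set V} (hMH : IsMISOn G H MH)
    (hML : IsMISOn G (H ∪ setNbrs G MH)ᶜ ML) : IsMIS G (MH ∪ ML) := by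
  obtain ⟨hMLsub, hMLind, hMLmax⟩ := hML
  have hsep : ∀ u ∈ MH, ∀ v ∈ ML, ¬ G.Adj u v := fun u hu v hv hadj =>
    hMLsub hv (Or.inr ⟨u, hu, hadj⟩)
  refine ⟨independent_union hMH.2.1 hMLind hsep, fun v hv => ?_⟩
  rw [Set.mem_union, not_or] at hv
  by_cases hvHN : v ∈ H ∪ setNbrs G MH
  · obtain ⟨u, hu, hadj⟩ := hMH.exists_adj_of_mem_union_setNbrs hvHN hv.1
    exact ⟨u, Or.inl hu, hadj⟩
  · obtain ⟨u, hu, hadj⟩ := hMLmax v hvHN hv.2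
    exact ⟨u, Or.inr hu, hadj⟩

end

theorem stmt7_general {V : Type*} (G : SimpleGraph V) (H MH ML : Set V)
    (hMH : IsMISOn G H MH)
    (hML : IsMISOn G ((H ∪ (setNbrs G MH \ H))ᶜ) ML) :
    IsMIS G (MH ∪ ML) := by
  rw [Set.union_sdiff_self] at hML
  exact hMH.isMIS_union hML

/-- Let `G` be a simple graph on a finite vertex set `V`, `H ⊆ V`, and `M_H` a
maximal independent set of `G[H]`. Define `I := N_G(M_H) \ H` and `L := V \ (H ∪ I)`, and let
`M_L` be a maximal independent set of `G[L]`. Then `M_H ∪ M_L` is a maximal independent set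
of `G`. -/
theorem stmt7 {V : Type*} [Finite V] (G : SimpleGraph V) (H MH ML : Set V)
    (hMH : IsMISOn G H MH)
    (hML : IsMISOn G ((H ∪ (setNbrs G MH \ H))ᶜ) ML) :
    IsMIS G (MH ∪ ML) :=
  stmt7_general G H MH ML hMH hML
end

section
/- Let G be a simple graph on a finite vertex set V and let R ≥ 1. Suppose L⁰ = V and for each r ∈ {1,…,R} there are sets Hʳ, Iʳ, Lʳ that partition Lʳ⁻¹, a set Mʳ ⊆ Hʳ that is a maximal independent set of the induced subgraph G[Hʳ] such that every vertex of Iʳ has a neighbor in Mʳ and no vertex of Lʳ has a neighbor in Mʳ. Let M* be a maximal independent set of G[L^R]. Then M¹ ∪ M² ∪ … ∪ M^R ∪ M* is a maximal independent set of G. -/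
open MeasureTheory ProbabilityTheory
open scoped ENNReal

namespace IsMISOn

variable {V : Type*} {G : SimpleGraph V}

theorem union_of_dominate_of_nonadj {H I L M N : Set V} (hM : IsMISOn G H M)
    (hI : ∀ v ∈ I, ∃ u ∈ M, G.Adj u v) (hL : ∀ v ∈ L, ¬ ∃ u ∈ M, G.Adj u v)
    (hN : IsMISOn G L N) :
    IsMISOn G (H ∪ I ∪ L) (M ∪ N) := by
  obtain ⟨hMH, hMind, hMdom⟩ := hM
  obtain ⟨hNL, hNind, hNdom⟩ := hN
  refine ⟨Set.union_subset_union (hMH.trans Set.subset_union_left) hNL, ?_, ?_⟩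
  · rintro u (hu | hu) v (hv | hv) hadj
    · exact hMind u hu v hv hadj
    · exact hL v (hNL hv) ⟨u, hu, hadj⟩
    · exact hL u (hNL hu) ⟨v, hv, hadj.symm⟩
    · exact hNind u hu v hv hadj
  · rintro v ((hvH | hvI) | hvL) hv
    · obtain ⟨u, hu, hadj⟩ := hMdom v hvH fun h => hv (Or.inl h)
      exact ⟨u, Or.inl hu, hadj⟩
    · obtain ⟨u, hu, hadj⟩ := hI v hvI
      exact ⟨u, Or.inl hu, hadj⟩
    · obtain ⟨u, hu, hadj⟩ := hNdom v hvL fun h => hv (Or.inr h)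
      exact ⟨u, Or.inr hu, hadj⟩

theorem univ_iff {M : Set V} : IsMISOn G Set.univ M ↔ IsMIS G M := by
  simp [IsMISOn, IsMIS]

end IsMISOn

theorem stmt8_general {V : Type*} (G : SimpleGraph V) (R : ℕ)
    (H I L M : ℕ → Set V) (Mstar : Set V)
    (hL0 : L 0 = Set.univ)
    (hpart : ∀ r, 1 ≤ r → r ≤ R → H r ∪ I r ∪ L r = L (r - 1))
    (hMIS : ∀ r, 1 ≤ r → r ≤ R → IsMISOn G (H r) (M r))
    (hI : ∀ r, 1 ≤ r → r ≤ R → ∀ v ∈ I r, ∃ u ∈ M r, G.Adj u v)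
    (hL : ∀ r, 1 ≤ r → r ≤ R → ∀ v ∈ L r, ¬ ∃ u ∈ M r, G.Adj u v)
    (hMstar : IsMISOn G (L R) Mstar) :
    IsMIS G ((⋃ r ∈ Set.Icc 1 R, M r) ∪ Mstar) := by
  have hlevel : ∀ k ≤ R, IsMISOn G (L k) ((⋃ r ∈ Set.Icc (k + 1) R, M r) ∪ Mstar) := by
    refine fun k hk => Nat.decreasingInduction (fun k hkR ih => ?_) ?_ hk
    · have hk1 : 1 ≤ k + 1 := k.succ_pos
      have hround :=
        (hMIS (k + 1) hk1 hkR).union_of_dominate_of_nonadj (hI (k + 1) hk1 hkR)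
          (hL (k + 1) hk1 hkR) ih
      rwa [hpart (k + 1) hk1 hkR, Nat.add_sub_cancel, ← Set.union_assoc,
        ← Set.biUnion_insert (t := M), Set.insert_Icc_add_one_left_eq_Icc hkR] at hround
    · simpa [Set.Icc_eq_empty_of_lt (Nat.lt_succ_self R)] using hMstar
  simpa [hL0, IsMISOn.univ_iff] using hlevel 0 (Nat.zero_le R)

/-- Let `G` be a simple graph on a finite vertex set `V`, `R ≥ 1`, `L⁰ = V`, and
for each `r ∈ {1,…,R}` let `Hʳ, Iʳ, Lʳ` partition `Lʳ⁻¹`, and let `Mʳ ⊆ Hʳ` be a maximal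
independent set of `G[Hʳ]` such that every vertex of `Iʳ` has a neighbor in `Mʳ` and no
vertex of `Lʳ` has a neighbor in `Mʳ`. If `M*` is a maximal independent set of `G[L^R]`,
then `M¹ ∪ … ∪ M^R ∪ M*` is a maximal independent set of `G`. -/
theorem stmt8 {V : Type*} [Finite V] (G : SimpleGraph V) (R : ℕ) (hR : 1 ≤ R)
    (H I L M : ℕ → Set V) (Mstar : Set V)
    (hL0 : L 0 = Set.univ)
    (hdisj : ∀ r, 1 ≤ r → r ≤ R →
      Disjoint (H r) (I r) ∧ Disjoint (H r) (L r) ∧ Disjoint (I r) (L r))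
    (hpart : ∀ r, 1 ≤ r → r ≤ R → H r ∪ I r ∪ L r = L (r - 1))
    (hMsub : ∀ r, 1 ≤ r → r ≤ R → M r ⊆ H r)
    (hMIS : ∀ r, 1 ≤ r → r ≤ R → IsMISOn G (H r) (M r))
    (hI : ∀ r, 1 ≤ r → r ≤ R → ∀ v ∈ I r, ∃ u ∈ M r, G.Adj u v)
    (hL : ∀ r, 1 ≤ r → r ≤ R → ∀ v ∈ L r, ¬ ∃ u ∈ M r, G.Adj u v)
    (hMstar : IsMISOn G (L R) Mstar) :
    IsMIS G ((⋃ r ∈ Set.Icc 1 R, M r) ∪ Mstar) :=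
  stmt8_general G R H I L M Mstar hL0 hpart hMIS hI hL hMstar
end

section
/- Let V be a finite vertex set, let r ≥ 1, and let p₁,…,p_r ∈ (0,1) satisfy p_j ≥ 2·p_{j−1} for all 1 < j ≤ r. Let H̃¹,…,H̃ʳ be mutually independent random subsets of V, where H̃ʲ is a p_j-random subset of V. Let e₁,…,e_k be any fixed sequence of pairs of vertices of V with k ≤ 1/(24·p_r²) − 1. Then the probability that the number of indices i for which at least one endpoint of e_i belongs to H̃¹ ∪ … ∪ H̃ʳ is at least p_r⁻¹ is at most 4·k·p_r², and hence at most 1/6. -/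
open MeasureTheory ProbabilityTheory
open scoped ENNReal

/-!
The doubling condition makes `p₁ + ⋯ + p_r ≤ 2 p_r`, so by a union bound each pair `e_i` meets
`H̃¹ ∪ ⋯ ∪ H̃ʳ` with probability at most `4 p_r`. The expected number of pairs hit is therefore at
most `4 k p_r`, and Markov's inequality at the threshold `p_r⁻¹` gives `4 k p_r²`, which the
hypothesis on `k` makes at most `1/6`.
-/

open Finset

theorem Fin.sum_le_two_mul_last {α : Type*} [Field α] [LinearOrder α] [IsStrictOrderedRing α]
    {n : ℕ} (a : Fin (n + 1) → α) (h0 : 0 ≤ a 0)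
    (hgrow : ∀ i : Fin n, 2 * a i.castSucc ≤ a i.succ) :
    ∑ i, a i ≤ 2 * a (Fin.last n) := by
  induction n with
  | zero => simpa [two_mul] using h0
  | succ n ih =>
    have hprefix := ih (fun i => a i.castSucc) h0 fun i => by
      simpa only [Fin.succ_castSucc] using hgrow i.castSucc
    rw [Fin.sum_univ_castSucc]
    have hlast := hgrow (Fin.last n)
    rw [Fin.succ_last] at hlast
    linarith

section Counting

variable {Ω ι : Type*} [Fintype ι] {A : ι → Set Ω} [∀ ω, DecidablePred fun i => ω ∈ A i]

theorem card_filter_mem_eq_sum_indicator (ω : Ω) :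
    (#{i | ω ∈ A i} : ℝ≥0∞) = ∑ i, (A i).indicator 1 ω := by
  simp [Set.indicator_apply]

variable [MeasurableSpace Ω] {μ : Measure Ω}

theorem lintegral_card_filter_mem (hA : ∀ i, MeasurableSet (A i)) :
    ∫⁻ ω, (#{i | ω ∈ A i} : ℝ≥0∞) ∂μ = ∑ i, μ (A i) := by
  simp_rw [card_filter_mem_eq_sum_indicator]
  rw [lintegral_finsetSum _ fun i _ => measurable_one.indicator (hA i)]
  exact Finset.sum_congr rfl fun i _ => lintegral_indicator_one (hA i)

theorem meas_ge_card_filter_mem_le (hA : ∀ i, MeasurableSet (A i)) {t : ℝ} (ht : 0 < t) :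
    μ {ω | t ≤ (#{i | ω ∈ A i} : ℝ)} ≤ ENNReal.ofReal t⁻¹ * ∑ i, μ (A i) := by
  have hcount : Measurable fun ω => (#{i | ω ∈ A i} : ℝ≥0∞) := by
    simp_rw [card_filter_mem_eq_sum_indicator]
    exact Finset.measurable_sum _ fun i _ => measurable_one.indicator (hA i)
  calc μ {ω | t ≤ (#{i | ω ∈ A i} : ℝ)}
      ≤ μ {ω | ENNReal.ofReal t ≤ #{i | ω ∈ A i}} := measure_mono fun ω hω => by
        simpa using ENNReal.ofReal_le_ofReal hω
    _ ≤ (∫⁻ ω, (#{i | ω ∈ A i} : ℝ≥0∞) ∂μ) / ENNReal.ofReal t :=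
        meas_ge_le_lintegral_div hcount.aemeasurable (by simpa using ht) ENNReal.ofReal_ne_top
    _ = ENNReal.ofReal t⁻¹ * ∑ i, μ (A i) := by
        rw [lintegral_card_filter_mem hA, ENNReal.ofReal_inv_of_pos ht, div_eq_mul_inv, mul_comm]

end Counting

section RandomSubsets

variable {V : Type*} [Fintype V]

theorem pRandom_mem (p : ℝ) (hp : p ≤ 1) (v : V) :
    pRandom V p hp {s | s v = true} = ENNReal.ofReal p := by
  change pRandom V p hp (Function.eval v ⁻¹' {true}) = _
  rw [pRandom, (measurePreserving_eval _ v).measure_preimage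
    MeasurableSet.of_discrete.nullMeasurableSet]
  exact PMF.toMeasure_apply_singleton _ _ (measurableSet_singleton true)

theorem multiRandom_mem {r : ℕ} (p : Fin r → ℝ) (hp : ∀ j, p j ≤ 1) (j : Fin r) (v : V) :
    multiRandom V p hp {ω | ω j v = true} = ENNReal.ofReal (p j) := by
  change multiRandom V p hp (Function.eval j ⁻¹' {s | s v = true}) = _
  rw [multiRandom, (measurePreserving_eval _ j).measure_preimage
      (measurableSet_eq_fun (measurable_pi_apply v) measurable_const).nullMeasurableSet]
  exact pRandom_mem (p j) (hp j) v

theorem multiRandom_exists_mem_le {r : ℕ} (p : Fin r → ℝ) (hp0 : ∀ j, 0 ≤ p j)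
    (hp : ∀ j, p j ≤ 1) (v : V) :
    multiRandom V p hp {ω | ∃ j, ω j v = true} ≤ ENNReal.ofReal (∑ j, p j) := by
  rw [Set.ofPred_exists, ENNReal.ofReal_sum_of_nonneg fun j _ => hp0 j]
  refine (measure_iUnion_fintype_le _ _).trans_eq ?_
  simp_rw [multiRandom_mem]

theorem multiRandom_exists_mem_or_le {r : ℕ} (p : Fin r → ℝ) (hp0 : ∀ j, 0 ≤ p j)
    (hp : ∀ j, p j ≤ 1) (x y : V) :
    multiRandom V p hp {ω | (∃ j, ω j x = true) ∨ (∃ j, ω j y = true)} ≤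
      2 * ENNReal.ofReal (∑ j, p j) := by
  rw [Set.ofPred_or, two_mul]
  exact (measure_union_le _ _).trans
    (add_le_add (multiRandom_exists_mem_le p hp0 hp x) (multiRandom_exists_mem_le p hp0 hp y))

end RandomSubsets

/-- Let `H̃¹,…,H̃ʳ` be mutually independent random subsets of a finite vertex
set `V`, with `H̃ʲ` a `p_j`-random subset, where `p_j ∈ (0,1)` and `p_j ≥ 2·p_{j−1}`. For any
fixed pairs `e₁,…,e_k` with `k ≤ 1/(24·p_r²) − 1`, the probability that the number of indices
`i` for which at least one endpoint of `e_i` lies in `H̃¹ ∪ … ∪ H̃ʳ` is at least `p_r⁻¹` is at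
most `4·k·p_r²`, and hence at most `1/6`. -/
theorem stmt11 {V : Type*} [Fintype V] (r : ℕ) (hr : 1 ≤ r) (p : Fin r → ℝ)
    (hp0 : ∀ j, 0 < p j) (hp1 : ∀ j, p j < 1)
    (hgrow : ∀ i j : Fin r, (i : ℕ) + 1 = (j : ℕ) → 2 * p i ≤ p j)
    (k : ℕ) (hk : (k : ℝ) ≤ 1 / (24 * p ⟨r - 1, by omega⟩ ^ 2) - 1)
    (e : Fin k → V × V) :
    multiRandom V p (fun j => (hp1 j).le)
        {ω | (p ⟨r - 1, by omega⟩)⁻¹ ≤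
          ((Finset.univ.filter fun i : Fin k =>
            (∃ j, ω j (e i).1 = true) ∨ (∃ j, ω j (e i).2 = true)).card : ℝ)}
        ≤ ENNReal.ofReal (4 * k * p ⟨r - 1, by omega⟩ ^ 2) ∧
      multiRandom V p (fun j => (hp1 j).le)
        {ω | (p ⟨r - 1, by omega⟩)⁻¹ ≤
          ((Finset.univ.filter fun i : Fin k =>
            (∃ j, ω j (e i).1 = true) ∨ (∃ j, ω j (e i).2 = true)).card : ℝ)}
        ≤ 1 / 6 := by
  set q := p ⟨r - 1, by omega⟩
  have hq0 : 0 < q := hp0 _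
  have hsum : ∑ j, p j ≤ 2 * q := by
    obtain ⟨n, rfl⟩ : ∃ n, r = n + 1 := ⟨r - 1, by omega⟩
    exact Fin.sum_le_two_mul_last p (hp0 0).le fun i => hgrow _ _ (by simp)
  set μ := multiRandom V p fun j => (hp1 j).le
  set E : Fin k → Set (Fin r → V → Bool) :=
    fun i => {ω | (∃ j, ω j (e i).1 = true) ∨ (∃ j, ω j (e i).2 = true)}
  have hedge (i : Fin k) : μ (E i) ≤ ENNReal.ofReal (4 * q) := by
    refine (multiRandom_exists_mem_or_le p (fun j => (hp0 j).le) _ _ _).trans ?_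
    rw [show 4 * q = 2 * (2 * q) by ring, ENNReal.ofReal_mul zero_le_two, ENNReal.ofReal_ofNat]
    gcongr
  have hexpect : ENNReal.ofReal q⁻¹⁻¹ * ∑ i, μ (E i) ≤ ENNReal.ofReal (4 * k * q ^ 2) :=
    calc ENNReal.ofReal q⁻¹⁻¹ * ∑ i, μ (E i)
        ≤ ENNReal.ofReal q * ∑ _i : Fin k, ENNReal.ofReal (4 * q) := by
          rw [inv_inv]; gcongr with i; exact hedge i
      _ = ENNReal.ofReal (4 * k * q ^ 2) := by
          rw [Finset.sum_const, Finset.card_univ, Fintype.card_fin, nsmul_eq_mul,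
            ← ENNReal.ofReal_natCast, ← ENNReal.ofReal_mul (by positivity),
            ← ENNReal.ofReal_mul hq0.le]
          ring_nf
  have hbound := (meas_ge_card_filter_mem_le (μ := μ)
    (fun i => (E i).to_countable.measurableSet) (inv_pos.2 hq0)).trans hexpect
  have hsmall : 4 * k * q ^ 2 ≤ 1 / 6 := by
    have : (k : ℝ) * (24 * q ^ 2) ≤ 1 := by
      rw [← le_div_iff₀ (by positivity)]; linarith
    linarith
  exact ⟨hbound, hbound.trans ((ENNReal.ofReal_le_ofReal hsmall).trans_eq (by
    rw [one_div, ENNReal.ofReal_inv_of_pos (by norm_num), ENNReal.ofReal_ofNat, one_div]))⟩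
end

section
/- Let G = (V,E) be a finite simple graph with m ≥ 1 edges. Then for every subset U ⊆ V with |U| ≥ 2, ⌈|E(U)| / (|U| − 1)⌉ ≤ ⌈√m⌉; consequently the arboricity α of G, defined as α = max over subsets U ⊆ V with |U| ≥ 2 of ⌈|E(U)|/(|U|−1)⌉, satisfies α ≤ ⌈√m⌉. -/
/-!
If `|U| - 1 ≥ ⌈√m⌉`, then `|E(U)| ≤ m ≤ ⌈√m⌉² ≤ ⌈√m⌉ (|U| - 1)`; otherwise `|U| ≤ ⌈√m⌉` and
`|E(U)| ≤ |U| (|U| - 1) / 2 ≤ ⌈√m⌉ (|U| - 1)`. Either way `|E(U)| / (|U| - 1) ≤ ⌈√m⌉`.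
-/

open Finset

namespace SimpleGraph

theorem card_filter_edgeFinset_mem_subset_le_choose_two {V : Type*} [Fintype V] [DecidableEq V]
    (G : SimpleGraph V) [DecidableRel G.Adj] (U : Finset V) :
    #{e ∈ G.edgeFinset | ∀ v ∈ e, v ∈ U} ≤ (#U).choose 2 := by
  have hfilter : {e ∈ G.edgeFinset | ∀ v ∈ e, v ∈ U} = {e ∈ G.edgeFinset | e.toFinset ⊆ U} :=
    filter_congr fun e _ => by simp only [subset_iff, Sym2.mem_toFinset]
  rw [hfilter, card_filter_edgeFinset_toFinset_subset]
  simpa using (G.induce (U : Set V)).card_edgeFinset_le_card_choose_two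

end SimpleGraph

theorem Nat.le_ceil_sqrt_mul_self (m : ℕ) : m ≤ ⌈√(m : ℝ)⌉₊ * ⌈√(m : ℝ)⌉₊ := by
  have h := Real.sqrt_le_iff.mp (Nat.le_ceil √(m : ℝ))
  exact_mod_cast h.2.trans_eq (sq _)

theorem Nat.le_mul_sub_one_of_le_mul_self_of_le_choose_two {e n s : ℕ} (hs : e ≤ s * s)
    (hn : e ≤ n.choose 2) : e ≤ s * (n - 1) := by
  rcases le_or_gt s (n - 1) with hsn | hns
  · exact hs.trans (Nat.mul_le_mul_left s hsn)
  · calc e ≤ n * (n - 1) / 2 := hn.trans_eq (Nat.choose_two_right n)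
      _ ≤ n * (n - 1) := Nat.div_le_self _ _
      _ ≤ s * (n - 1) := Nat.mul_le_mul_right _ (by omega)

theorem Nat.ceil_div_le_of_le_mul {e k s : ℕ} (hk : 0 < k) (h : e ≤ s * k) :
    ⌈(e : ℝ) / k⌉₊ ≤ s := by
  rw [Nat.ceil_le, div_le_iff₀ (by exact_mod_cast hk)]
  exact_mod_cast h

theorem stmt16_general {V : Type*} [Fintype V] [DecidableEq V] (G : SimpleGraph V)
    [DecidableRel G.Adj] (m : ℕ) (hm : G.edgeFinset.card = m) :
    (∀ U : Finset V, 2 ≤ U.card →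
      ⌈((G.edgeFinset.filter fun e => ∀ v ∈ e, v ∈ U).card : ℝ) /
          ((U.card : ℝ) - 1)⌉₊ ≤ ⌈Real.sqrt m⌉₊) ∧
    (Finset.univ.filter fun U : Finset V => 2 ≤ U.card).sup
        (fun U => ⌈((G.edgeFinset.filter fun e => ∀ v ∈ e, v ∈ U).card : ℝ) /
          ((U.card : ℝ) - 1)⌉₊) ≤ ⌈Real.sqrt m⌉₊ := by
  have key : ∀ U : Finset V, 2 ≤ #U →
      ⌈(#{e ∈ G.edgeFinset | ∀ v ∈ e, v ∈ U} : ℝ) / ((#U : ℝ) - 1)⌉₊ ≤ ⌈√(m : ℝ)⌉₊ := by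
    intro U hU
    have hE : #{e ∈ G.edgeFinset | ∀ v ∈ e, v ∈ U} ≤ ⌈√(m : ℝ)⌉₊ * ⌈√(m : ℝ)⌉₊ :=
      ((card_filter_le _ _).trans hm.le).trans (Nat.le_ceil_sqrt_mul_self m)
    rw [← Nat.cast_pred (by omega)]
    exact Nat.ceil_div_le_of_le_mul (by omega) <|
      Nat.le_mul_sub_one_of_le_mul_self_of_le_choose_two hE
        (G.card_filter_edgeFinset_mem_subset_le_choose_two U)
  exact ⟨key, Finset.sup_le fun U hU => key U (mem_filter.mp hU).2⟩

/-- Let `G = (V, E)` be a finite simple graph with `m ≥ 1` edges. Then for every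
`U ⊆ V` with `|U| ≥ 2`, `⌈|E(U)|/(|U|−1)⌉ ≤ ⌈√m⌉`, where `E(U)` is the set of edges with both
endpoints in `U`; consequently the arboricity `α = max_{U, |U| ≥ 2} ⌈|E(U)|/(|U|−1)⌉`
satisfies `α ≤ ⌈√m⌉`. -/
theorem stmt16 {V : Type*} [Fintype V] [DecidableEq V] (G : SimpleGraph V)
    [DecidableRel G.Adj] (m : ℕ) (hm : G.edgeFinset.card = m) (hm1 : 1 ≤ m) :
    (∀ U : Finset V, 2 ≤ U.card →
      ⌈((G.edgeFinset.filter fun e => ∀ v ∈ e, v ∈ U).card : ℝ) /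
          ((U.card : ℝ) - 1)⌉₊ ≤ ⌈Real.sqrt m⌉₊) ∧
    (Finset.univ.filter fun U : Finset V => 2 ≤ U.card).sup
        (fun U => ⌈((G.edgeFinset.filter fun e => ∀ v ∈ e, v ∈ U).card : ℝ) /
          ((U.card : ℝ) - 1)⌉₊) ≤ ⌈Real.sqrt m⌉₊ :=
  stmt16_general G m hm
end
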